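/- arXiv:2208.08055 — 4 statements merged into one kernel-verified Lean document; each statement's English description precedes it below -/
import Mathlib

section
/- (Corollary 1: RIS aligned to user k, N → ∞.) Fix M and all real parameters, and for each N ≥ 1 let f_1(N),…,f_K(N) and b_{ki}(N) (i ≠ k) be admissible data such that |f_k(N)| = N for every N, there is a constant C > 0 with |f_i(N)| ≤ C for all i ≠ k and all N, and |b_{ki}(N)| ≤ N for all i ≠ k. Then the closed-form rate satisfies R̃_k(N) → log₂( τι²M/(1−τ) + (1−ι²τ)/(1−τ) ) as N → ∞. -/
/-!
Divide the numerator and the denominator of the SINR by `N⁴`. When `|f_k| = N`, `ξ_k / N⁴` is a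
polynomial in `1/N`, and `ϖ_k / N²` and `ζ / N²` converge (only user `k` contributes to `ζ` at
order `N²`). Since `|f_i| ≤ C` and `|b_ki| ≤ N`, every interference term `γ_ki` is `O(N³)`, and
the noise term is `O(N²)`. Hence the SINR tends to
`p_k τ² ξ_∞ / (τ(1-τ) ϖ_∞ ζ_∞ M) = τ(ι²M + 1 - ι²)/(1-τ)`.
-/

open MeasureTheory ProbabilityTheory Filter Finset

noncomputable section
/-- Coefficient `c_{k,1}`. -/
def ck1 (N : ℕ) (μk δ ρ : ℝ) (fk : ℂ) : ℝ :=
  (ρ^2*(μk+δ+1)^2 + (1-ρ^2)*δ^2*μk + δ^2) * (N:ℝ)^2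
  + (((2*μk+3*δ+2-δ*μk)*ρ^2 + (1+μk)*δ) * δ*μk*(‖fk‖)^2
     + (μk+δ+2)^2 - ρ^2*(μk+δ+1)^2 - 2*ρ^2*δ*μk - 2) * (N:ℝ)
  + ρ^2*δ^2*μk^2*(‖fk‖)^4 + 2*((1-ρ^2)*(μk+δ)+2)*δ*μk*(‖fk‖)^2

/-- Coefficient `c_{k,2}`. -/
def ck2 (μk δ ρ ι : ℝ) : ℝ :=
  ((1-ι^2)*(μk+δ+1)^2 - δ*μk*(μk+1+δ-ι^2*δ))*ρ^2 + (δ+μk+1)*δ*μk + (μk+δ+1)^2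
  - (μk+1)*ι^2*δ^2

/-- Coefficient `c_{k,3}`. -/
def ck3 (μk δ ρ ι : ℝ) (fk : ℂ) : ℝ :=
  (((3-2*ι^2)*(μk+1) + (ι^2-1)*δ*(μk-3))*ρ^2 + (δ+1-ι^2*δ)*(μk+1)) * δ*μk*(‖fk‖)^2
  + ((ι^2-1)*(μk+δ+1)^2 + 2*(ι^2-2)*μk*δ)*ρ^2
  + (1-ι^2)*(μk+δ+2)^2 + 2*μk*δ + 2*μk + 2*δ - 1 - 2*ι^2

/-- Coefficient `c_{k,4}`. -/
def ck4 (μk δ ρ ι : ℝ) (fk : ℂ) : ℝ :=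
  (1-ι^2)*ρ^2*δ^2*μk^2*(‖fk‖)^4
  + 2*δ*μk*(‖fk‖)^2*((1-ι^2)*(1-ρ^2)*(μk+δ+1) + (2-ι^2)*(1+ρ^2))

/-- The closed-form second moment `ξ_k`. -/
def xiK (M N : ℕ) (αk μk β δ ρ ι κ : ℝ) (fk : ℂ) : ℝ :=
  (β^2*αk^2*κ^2*(M:ℝ)/((δ+1)^2*(μk+1)^2))
    * (ck1 N μk δ ρ fk * ι^2 * (M:ℝ) + ck2 μk δ ρ ι * (N:ℝ)^2 + ck3 μk δ ρ ι fk * (N:ℝ)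
       + ck4 μk δ ρ ι fk)

/-- Coefficient `z_{ki,1}`. -/
def zki1 (N : ℕ) (μk μi δ ρ : ℝ) (fk fi bki : ℂ) : ℝ :=
  (μi+1-ρ^2*μi)*δ^2*(N:ℝ)^2
  + ((μi+1-ρ^2*μi)*δ^2*μk*(‖fk‖)^2 + ρ^2*δ^2*μi*(‖fi‖)^2
     + (μk+2*δ+1)*(μi+1-ρ^2*μi) + ρ^2*μi) * (N:ℝ)
  + (2*δ*(‖fi‖)^2 + μk*(‖bki‖)^2
     + 2*δ*μk*((starRingEnd ℂ) fk * fi * (starRingEnd ℂ) bki).re)*ρ^2*μi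
  + (ρ^2*δ*μi*(‖fi‖)^2 + 2*μi*(1-ρ^2) + 2)*δ*μk*(‖fk‖)^2

/-- Coefficient `z_{ki,2}`. -/
def zki2 (μk μi δ ρ ι : ℝ) : ℝ :=
  ((δ+1)*μk + (δ+1)^2 - ι^2*δ^2)*(μi+1) - (μk+δ+1-ι^2*δ)*ρ^2*δ*μi - 1

/-- Coefficient `z_{ki,3}`. -/
def zki3 (μk μi δ ρ ι : ℝ) (fk fi : ℂ) : ℝ :=
  ((1-ι^2)*δ*(μi+1-ρ^2*μi) + μi+1)*δ*μk*(‖fk‖)^2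
  + ((μi+1)*(μk+2*δ+1) - (μk+2*δ)*ρ^2*μi)*(1-ι^2)
  + (μk+δ+1-ι^2*δ)*ρ^2*δ*μi*(‖fi‖)^2

/-- Coefficient `z_{ki,4}`. -/
def zki4 (μk μi δ ρ ι : ℝ) (fk fi bki : ℂ) : ℝ :=
  ((δ*(‖fi‖)^2-2)*ρ^2*μi + 2*μi + 2)*(1-ι^2)*δ*μk*(‖fk‖)^2
  + (1-ι^2)*ρ^2*μk*μi*((‖bki‖)^2
     + 2*δ*((starRingEnd ℂ) fk * fi * (starRingEnd ℂ) bki).re)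
  + 2*(1-ι^2)*ρ^2*δ*μi*(‖fi‖)^2

/-- The closed-form interference second moment `γ_{ki}`. -/
def gammaKI (M N : ℕ) (αk αi μk μi β δ ρ ι κ : ℝ) (fk fi bki : ℂ) : ℝ :=
  (κ^2*β^2*αk*αi*(M:ℝ)/((δ+1)^2*(μk+1)*(μi+1)))
    * (zki1 N μk μi δ ρ fk fi bki * ι^2 * (M:ℝ) + zki2 μk μi δ ρ ι * (N:ℝ)^2
       + zki3 μk μi δ ρ ι fk fi * (N:ℝ) + zki4 μk μi δ ρ ι fk fi bki)

/-- The quantity `ϖ_k`. -/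
def varpiK (N : ℕ) (αk μk β δ : ℝ) (fk : ℂ) : ℝ :=
  (β*αk/((δ+1)*(μk+1))) * (δ*μk*(‖fk‖)^2 + (μk+δ+1)*(N:ℝ))

/-- The quantity `ζ`. -/
def zetaV (K N : ℕ) (p α μ : Fin K → ℝ) (β δ ρ κ : ℝ) (f : Fin K → ℂ) : ℝ :=
  ∑ s, (κ^2 * p s * β * α s / ((δ+1)*(μ s + 1)))
    * (ρ^2*δ*(μ s)*(‖f s‖)^2 + ((1-ρ^2)*δ*(μ s) + δ + μ s + 1)*(N:ℝ))

/-- The closed-form approximate rate `R̃_k`. -/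
def Rtilde (K : ℕ) (k : Fin K) (M N : ℕ) (p α μ : Fin K → ℝ)
    (β δ ρ ι κ τ σ2 σRF2 : ℝ) (f : Fin K → ℂ) (b : Fin K → ℂ) : ℝ :=
  Real.logb 2 (1 + p k * τ^2 * xiK M N (α k) (μ k) β δ ρ ι κ (f k) /
    ((∑ i ∈ Finset.univ.erase k,
        p i * τ^2 * gammaKI M N (α k) (α i) (μ k) (μ i) β δ ρ ι κ (f k) (f i) (b i))
     + τ*(1-τ) * varpiK N (α k) (μ k) β δ (f k) * zetaV K N p α μ β δ ρ κ f * (M:ℝ)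
     + τ*(σRF2+σ2) * varpiK N (α k) (μ k) β δ (f k) * (M:ℝ)))

/-- The coefficient `Γ_k` of Corollary 3 / the power scaling law. -/
def GammaK (N : ℕ) (αk μk β δ ρ ι κ τ : ℝ) (fk : ℂ) : ℝ :=
  τ^2*ι^2*κ^2*β^2*αk^2 * ck1 N μk δ ρ fk / ((δ+1)^2*(μk+1)^2)

/-- The coefficient `Γ_{ki}` of Corollary 3 / the power scaling law. -/
def GammaKI (N : ℕ) (αk αi μk μi β δ ρ ι κ τ : ℝ) (fk fi bki : ℂ) : ℝ :=
  τ^2*ι^2*κ^2*β^2*αk*αi * zki1 N μk μi δ ρ fk fi bki / ((δ+1)^2*(μk+1)*(μi+1))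

open Asymptotics Topology

lemma Asymptotics.IsBigO.mul_const {α R F : Type*} [SeminormedCommRing R] [Norm F]
    {l : Filter α} {f : α → R} {g : α → F} (hf : f =O[l] g) (c : R) :
    (fun x => f x * c) =O[l] g := by
  simpa only [mul_comm] using hf.const_mul_left c

section PolynomialGrowth

abbrev natPow (j : ℕ) : ℕ → ℝ := fun N => (N : ℝ) ^ j

lemma natPow_isLittleO_natPow {j l : ℕ} (h : j < l) : natPow j =o[atTop] natPow l :=
  (isLittleO_pow_pow_atTop_of_lt h).comp_tendsto tendsto_natCast_atTop_atTop

lemma natPow_isBigO_natPow {j l : ℕ} (h : j ≤ l) : natPow j =O[atTop] natPow l := by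
  rcases h.eq_or_lt with rfl | h
  · exact isBigO_refl _ _
  · exact (natPow_isLittleO_natPow h).isBigO

lemma natCast_isBigO_natPow_one : (fun N : ℕ => (N : ℝ)) =O[atTop] natPow 1 :=
  (isBigO_refl _ _).congr_right fun N => (pow_one (N : ℝ)).symm

lemma const_isBigO_natPow (c : ℝ) (l : ℕ) : (fun _ : ℕ => c) =O[atTop] natPow l :=
  (isBigO_const_one ℝ c atTop).trans
    ((natPow_isBigO_natPow (Nat.zero_le l)).congr_left fun N => pow_zero (N : ℝ))

lemma isBigO_natPow_of_norm_le {E : Type*} [Norm E] {x : ℕ → E} {c : ℝ} (j : ℕ)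
    (h : ∀ᶠ N in atTop, ‖x N‖ ≤ c * (N : ℝ) ^ j) : x =O[atTop] natPow j :=
  .of_bound c <| h.mono fun N hN => by simpa using hN

variable {R : Type*} [SeminormedRing R] {f g : ℕ → R} {j l : ℕ}

lemma Asymptotics.IsBigO.trans_natPow (hf : f =O[atTop] natPow j) (h : j ≤ l) :
    f =O[atTop] natPow l :=
  hf.trans (natPow_isBigO_natPow h)

lemma Asymptotics.IsBigO.mul_natPow (hf : f =O[atTop] natPow j) (hg : g =O[atTop] natPow l) :
    (fun N => f N * g N) =O[atTop] natPow (j + l) := by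
  simpa only [← pow_add] using hf.mul hg

lemma Asymptotics.IsBigO.pow_natPow (hf : f =O[atTop] natPow j) (n : ℕ) :
    (fun N => f N ^ n) =O[atTop] natPow (j * n) := by
  simpa only [← pow_mul] using hf.pow n

lemma Asymptotics.IsBigO.tendsto_div_natPow {g : ℕ → ℝ} (h : g =O[atTop] natPow j)
    (hjl : j < l) : Tendsto (fun N => g N / (N : ℝ) ^ l) atTop (𝓝 0) :=
  (h.trans_isLittleO (natPow_isLittleO_natPow hjl)).tendsto_div_nhds_zero

lemma tendsto_of_eventually_eq_comp_inv {g : ℕ → ℝ} (G : ℝ → ℝ) {L : ℝ} (hG : ContinuousAt G 0)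
    (hL : G 0 = L) (h : ∀ᶠ N in atTop, g N = G (N : ℝ)⁻¹) : Tendsto g atTop (𝓝 L) :=
  hL ▸ (hG.tendsto.comp (tendsto_inv_atTop_zero.comp tendsto_natCast_atTop_atTop)).congr'
    (h.mono fun _ hN => hN.symm)

end PolynomialGrowth

section Interference

variable {fk fi bki : ℕ → ℂ} {M : ℕ} {αk αi μk μi β δ ρ ι κ : ℝ}

lemma re_conj_mul_mul_conj_isBigO (hfk : fk =O[atTop] natPow 1) (hfi : fi =O[atTop] natPow 0)
    (hbki : bki =O[atTop] natPow 1) :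
    (fun N => ((starRingEnd ℂ) (fk N) * fi N * (starRingEnd ℂ) (bki N)).re)
      =O[atTop] natPow 2 := by
  refine (isBigO_of_le _ fun N => ?_).trans
    ((hfk.norm_left.mul_natPow hfi.norm_left).mul_natPow hbki.norm_left)
  rw [Real.norm_eq_abs]
  refine (Complex.abs_re_le_norm _).trans_eq ?_
  simp [norm_mul]

lemma zki1_isBigO (hfk : fk =O[atTop] natPow 1) (hfi : fi =O[atTop] natPow 0)
    (hbki : bki =O[atTop] natPow 1) :
    (fun N => zki1 N μk μi δ ρ (fk N) (fi N) (bki N)) =O[atTop] natPow 3 := by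
  have hfk2 := hfk.norm_left.pow_natPow 2
  have hfi2 := hfi.norm_left.pow_natPow 2
  simp only [zki1]
  refine ((IsBigO.add ?_ ?_).add ?_).add ?_
  · exact (natPow_isBigO_natPow (by norm_num : 2 ≤ 3)).const_mul_left _
  · refine IsBigO.mul_natPow (j := 2) (((IsBigO.add ?_ ?_).add ?_).add ?_)
      natCast_isBigO_natPow_one
    · exact hfk2.const_mul_left _
    · exact (hfi2.trans_natPow (Nat.zero_le 2)).const_mul_left _
    · exact const_isBigO_natPow _ _
    · exact const_isBigO_natPow _ _
  · refine ((IsBigO.mul_const ?_ _).mul_const _).trans_natPow (by norm_num : 2 ≤ 3)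
    exact (((hfi2.trans_natPow (Nat.zero_le 2)).const_mul_left _).add
      ((hbki.norm_left.pow_natPow 2).const_mul_left _)).add
      ((re_conj_mul_mul_conj_isBigO hfk hfi hbki).const_mul_left _)
  · refine (IsBigO.mul_natPow (j := 0) ?_ hfk2).trans_natPow (by norm_num : 2 ≤ 3)
    exact ((((hfi2.const_mul_left _).add (const_isBigO_natPow _ _)).add
      (const_isBigO_natPow _ _)).mul_const _).mul_const _

lemma zki3_isBigO (hfk : fk =O[atTop] natPow 1) (hfi : fi =O[atTop] natPow 0) :
    (fun N => zki3 μk μi δ ρ ι (fk N) (fi N)) =O[atTop] natPow 2 := by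
  simp only [zki3]
  exact (((hfk.norm_left.pow_natPow 2).const_mul_left _).add (const_isBigO_natPow _ _)).add
    (((hfi.norm_left.pow_natPow 2).trans_natPow (Nat.zero_le 2)).const_mul_left _)

lemma zki4_isBigO (hfk : fk =O[atTop] natPow 1) (hfi : fi =O[atTop] natPow 0)
    (hbki : bki =O[atTop] natPow 1) :
    (fun N => zki4 μk μi δ ρ ι (fk N) (fi N) (bki N)) =O[atTop] natPow 2 := by
  have hfi2 := hfi.norm_left.pow_natPow 2
  have hcoef : (fun N => (δ * ‖fi N‖ ^ 2 - 2) * ρ ^ 2 * μi + 2 * μi + 2) =O[atTop] natPow 0 :=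
    (((((hfi2.const_mul_left _).sub (const_isBigO_natPow _ _)).mul_const _).mul_const _).add
      (const_isBigO_natPow _ _)).add (const_isBigO_natPow _ _)
  simp only [zki4]
  refine (IsBigO.add ?_ ?_).add ?_
  · exact (((hcoef.mul_const _).mul_const _).mul_const _).mul_natPow
      (hfk.norm_left.pow_natPow 2)
  · exact ((hbki.norm_left.pow_natPow 2).add
      ((re_conj_mul_mul_conj_isBigO hfk hfi hbki).const_mul_left _)).const_mul_left _
  · exact (hfi2.trans_natPow (Nat.zero_le 2)).const_mul_left _

lemma gammaKI_isBigO (hfk : fk =O[atTop] natPow 1) (hfi : fi =O[atTop] natPow 0)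
    (hbki : bki =O[atTop] natPow 1) :
    (fun N => gammaKI M N αk αi μk μi β δ ρ ι κ (fk N) (fi N) (bki N)) =O[atTop] natPow 3 := by
  simp only [gammaKI]
  refine IsBigO.const_mul_left (((IsBigO.add ?_ ?_).add ?_).add ?_) _
  · exact ((zki1_isBigO hfk hfi hbki).mul_const _).mul_const _
  · exact (natPow_isBigO_natPow (by norm_num : 2 ≤ 3)).const_mul_left _
  · exact (zki3_isBigO hfk hfi).mul_natPow natCast_isBigO_natPow_one
  · exact (zki4_isBigO hfk hfi hbki).trans_natPow (by norm_num)

end Interference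

section AlignedUser

variable {x : ℕ → ℂ}

lemma tendsto_mul_add_div_sq (hx : ∀ᶠ N in atTop, ‖x N‖ = N) (c a b : ℝ) :
    Tendsto (fun N : ℕ => c * (a * ‖x N‖ ^ 2 + b * N) / (N : ℝ) ^ 2) atTop (𝓝 (c * a)) := by
  refine tendsto_of_eventually_eq_comp_inv (fun u => c * (a + b * u)) (by fun_prop) (by simp) ?_
  filter_upwards [hx, eventually_ne_atTop 0] with N hN hN0
  rw [hN]
  field_simp

lemma tendsto_xiK_div_pow_four (M : ℕ) (αk μk β δ ρ ι κ : ℝ) (hx : ∀ᶠ N in atTop, ‖x N‖ = N) :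
    Tendsto (fun N => xiK M N αk μk β δ ρ ι κ (x N) / (N : ℝ) ^ 4) atTop
      (𝓝 (β^2*αk^2*κ^2*M/((δ+1)^2*(μk+1)^2) * (ρ^2*δ^2*μk^2*(ι^2*M + 1 - ι^2)))) := by
  refine tendsto_of_eventually_eq_comp_inv (fun u =>
    β^2*αk^2*κ^2*M/((δ+1)^2*(μk+1)^2) *
      ((ρ^2*δ^2*μk^2 + ((2*μk+3*δ+2-δ*μk)*ρ^2 + (1+μk)*δ)*δ*μk*u
          + (ρ^2*(μk+δ+1)^2 + (1-ρ^2)*δ^2*μk + δ^2 + 2*((1-ρ^2)*(μk+δ)+2)*δ*μk)*u^2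
          + ((μk+δ+2)^2 - ρ^2*(μk+δ+1)^2 - 2*ρ^2*δ*μk - 2)*u^3) * ι^2 * M
        + ck2 μk δ ρ ι * u^2
        + (((3-2*ι^2)*(μk+1) + (ι^2-1)*δ*(μk-3))*ρ^2 + (δ+1-ι^2*δ)*(μk+1))*δ*μk*u
        + (((ι^2-1)*(μk+δ+1)^2 + 2*(ι^2-2)*μk*δ)*ρ^2 + (1-ι^2)*(μk+δ+2)^2
            + 2*μk*δ + 2*μk + 2*δ - 1 - 2*ι^2)*u^3
        + (1-ι^2)*ρ^2*δ^2*μk^2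
        + 2*δ*μk*((1-ι^2)*(1-ρ^2)*(μk+δ+1) + (2-ι^2)*(1+ρ^2))*u^2))
    (by fun_prop) (by ring) ?_
  filter_upwards [hx, eventually_ne_atTop 0] with N hN hN0
  rw [xiK, mul_div_assoc]
  congr 1
  simp only [ck1, ck3, ck4, hN]
  field_simp
  ring

end AlignedUser

section Rate

variable {K : ℕ} (k : Fin K) (M : ℕ) (p α μ : Fin K → ℝ) (β δ ρ ι κ τ : ℝ)
  {f b : ℕ → Fin K → ℂ}

lemma tendsto_zetaV_div_sq (hfk : ∀ᶠ N in atTop, ‖f N k‖ = N)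
    (hfi : ∀ i ≠ k, (fun N => f N i) =O[atTop] natPow 0) :
    Tendsto (fun N => zetaV K N p α μ β δ ρ κ (f N) / (N : ℝ) ^ 2) atTop
      (𝓝 (κ^2 * p k * β * α k / ((δ+1)*(μ k + 1)) * (ρ^2*δ*μ k))) := by
  have hterm : ∀ i, Tendsto (fun N : ℕ => κ^2 * p i * β * α i / ((δ+1)*(μ i + 1))
      * (ρ^2*δ*μ i*‖f N i‖^2 + ((1-ρ^2)*δ*μ i + δ + μ i + 1)*N) / (N : ℝ) ^ 2) atTop
      (𝓝 (if i = k then κ^2 * p k * β * α k / ((δ+1)*(μ k + 1)) * (ρ^2*δ*μ k) else 0)) := by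
    intro i
    by_cases hik : i = k
    · subst hik
      simpa using tendsto_mul_add_div_sq hfk _ _ _
    · have hfi2 := ((hfi i hik).norm_left.pow_natPow 2).trans_natPow zero_le_one
      simpa [hik] using IsBigO.tendsto_div_natPow (((hfi2.const_mul_left _).add
        (natCast_isBigO_natPow_one.const_mul_left _)).const_mul_left _) one_lt_two
  simpa [zetaV, Finset.sum_div] using tendsto_finsetSum Finset.univ fun i _ => hterm i

lemma tendsto_interference_div_pow_four (hfk : (fun N => f N k) =O[atTop] natPow 1)
    (hfi : ∀ i ≠ k, (fun N => f N i) =O[atTop] natPow 0)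
    (hbi : ∀ i ≠ k, (fun N => b N i) =O[atTop] natPow 1) :
    Tendsto (fun N => (∑ i ∈ Finset.univ.erase k, p i * τ ^ 2 *
        gammaKI M N (α k) (α i) (μ k) (μ i) β δ ρ ι κ (f N k) (f N i) (b N i)) / (N : ℝ) ^ 4)
      atTop (𝓝 0) := by
  refine IsBigO.tendsto_div_natPow (j := 3) (IsBigO.fun_sum fun i hi => ?_) (by norm_num)
  have hik := (Finset.mem_erase.1 hi).1
  exact (gammaKI_isBigO hfk (hfi i hik) (hbi i hik)).const_mul_left _

lemma tendsto_rate_denominator_div_pow_four (σ2 σRF2 : ℝ) (hfk : ∀ᶠ N in atTop, ‖f N k‖ = N)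
    (hfi : ∀ i ≠ k, (fun N => f N i) =O[atTop] natPow 0)
    (hbi : ∀ i ≠ k, (fun N => b N i) =O[atTop] natPow 1) :
    Tendsto (fun N => ((∑ i ∈ Finset.univ.erase k,
          p i * τ^2 * gammaKI M N (α k) (α i) (μ k) (μ i) β δ ρ ι κ (f N k) (f N i) (b N i))
        + τ*(1-τ) * varpiK N (α k) (μ k) β δ (f N k) * zetaV K N p α μ β δ ρ κ (f N) * (M:ℝ)
        + τ*(σRF2+σ2) * varpiK N (α k) (μ k) β δ (f N k) * (M:ℝ)) / (N : ℝ) ^ 4) atTop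
      (𝓝 (τ*(1-τ) * (β * α k / ((δ+1)*(μ k + 1)) * (δ * μ k))
        * (κ^2 * p k * β * α k / ((δ+1)*(μ k + 1)) * (ρ^2*δ*μ k)) * M)) := by
  have hfkO : (fun N => f N k) =O[atTop] natPow 1 :=
    isBigO_natPow_of_norm_le (c := 1) 1 (hfk.mono fun N hN => by simp [hN])
  have hinterference := tendsto_interference_div_pow_four k M p α μ β δ ρ ι κ τ hfkO hfi hbi
  have hvarpi := tendsto_mul_add_div_sq hfk (β * α k / ((δ+1)*(μ k + 1))) (δ * μ k) (μ k + δ + 1)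
  have hzeta := tendsto_zetaV_div_sq k p α μ β δ ρ κ hfk hfi
  have hinv : Tendsto (fun N : ℕ => ((N : ℝ)⁻¹) ^ 2) atTop (𝓝 0) := by
    simpa using (tendsto_inv_atTop_zero.comp (tendsto_natCast_atTop_atTop (R := ℝ))).pow 2
  have hsum := (hinterference.add (((hvarpi.const_mul (τ*(1-τ))).mul hzeta).mul_const (M:ℝ))).add
    (((hvarpi.const_mul (τ*(σRF2+σ2))).mul_const (M:ℝ)).mul hinv)
  rw [zero_add, mul_zero, add_zero] at hsum
  refine hsum.congr' ?_
  filter_upwards [eventually_ne_atTop 0] with N hN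
  simp only [varpiK]
  rw [add_div, add_div]
  congr 1
  · congr 1
    field_simp
  · field_simp

end Rate

lemma tendsto_logb_one_add_div {a b : ℕ → ℝ} {A B : ℝ} (c : ℝ) (d : ℕ)
    (ha : Tendsto (fun N => a N / (N : ℝ) ^ d) atTop (𝓝 A))
    (hb : Tendsto (fun N => b N / (N : ℝ) ^ d) atTop (𝓝 B)) (hB : B ≠ 0) (hAB : 1 + A / B ≠ 0) :
    Tendsto (fun N => Real.logb c (1 + a N / b N)) atTop (𝓝 (Real.logb c (1 + A / B))) := by
  refine (((ha.div hb hB).const_add 1).logb hAB).congr' ?_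
  filter_upwards [eventually_ne_atTop 0] with N hN
  rw [Pi.div_apply, div_div_div_cancel_right₀ (pow_ne_zero d (Nat.cast_ne_zero.2 hN))]

section LimitValue

variable {pk αk μk β δ ρ ι κ τ : ℝ} {M : ℕ}

lemma rate_denominator_limit_pos (hpk : 0 < pk) (hαk : 0 < αk) (hμk : 0 < μk) (hβ : 0 < β)
    (hδ : 0 < δ) (hρ : 0 < ρ) (hκ : 0 < κ) (hτ0 : 0 < τ) (hτ1 : τ < 1) (hM : 0 < M) :
    0 < τ*(1-τ) * (β * αk / ((δ+1)*(μk + 1)) * (δ * μk))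
      * (κ^2 * pk * β * αk / ((δ+1)*(μk + 1)) * (ρ^2*δ*μk)) * M := by
  have h1τ : 0 < 1 - τ := sub_pos.2 hτ1
  positivity

lemma one_add_sinr_limit_eq (hpk : 0 < pk) (hαk : 0 < αk) (hμk : 0 < μk) (hβ : 0 < β)
    (hδ : 0 < δ) (hρ : 0 < ρ) (hκ : 0 < κ) (hτ1 : τ < 1) (hM : 0 < M) :
    1 + pk * τ^2 * (β^2*αk^2*κ^2*M/((δ+1)^2*(μk+1)^2) * (ρ^2*δ^2*μk^2*(ι^2*M + 1 - ι^2)))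
        / (τ*(1-τ) * (β * αk / ((δ+1)*(μk + 1)) * (δ * μk))
          * (κ^2 * pk * β * αk / ((δ+1)*(μk + 1)) * (ρ^2*δ*μk)) * M)
      = τ*ι^2*M/(1-τ) + (1-ι^2*τ)/(1-τ) := by
  have h1τ : 1 - τ ≠ 0 := (sub_pos.2 hτ1).ne'
  field_simp
  ring

lemma sinr_limit_add_one_pos (hτ0 : 0 < τ) (hτ1 : τ < 1) (hM : 0 < M) :
    0 < τ*ι^2*M/(1-τ) + (1-ι^2*τ)/(1-τ) := by
  have hM1 : (1 : ℝ) ≤ M := by exact_mod_cast hM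
  rw [← add_div]
  exact div_pos (by nlinarith [mul_nonneg (mul_nonneg hτ0.le (sq_nonneg ι)) (sub_nonneg.2 hM1)])
    (sub_pos.2 hτ1)

end LimitValue

theorem corollary1_aligned_N_to_infinity_general
    (K : ℕ) (k : Fin K)
    (α μ : Fin K → ℝ) (β δ ρ ι κ τ σ2 σRF2 : ℝ)
    (hα : ∀ i, 0 < α i) (hμ : ∀ i, 0 < μ i)
    (hβ : 0 < β) (hδ : 0 < δ)
    (hρ : ρ ∈ Set.Ioo (0:ℝ) 1) (hκ : κ ∈ Set.Ioc (0:ℝ) 1)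
    (hτ : τ ∈ Set.Ioo (0:ℝ) 1)
    (p : Fin K → ℝ) (hp : ∀ i, 0 < p i)
    (M : ℕ) (hM : 0 < M)
    (f b : ℕ → Fin K → ℂ)
    (hb_adm : ∀ N, 1 ≤ N → ∀ i, i ≠ k → ‖b N i‖ ≤ N)
    (hfk : ∀ N, 1 ≤ N → ‖f N k‖ = N)
    (C : ℝ)
    (hfi : ∀ N, 1 ≤ N → ∀ i, i ≠ k → ‖f N i‖ ≤ C) :
    Tendsto (fun N : ℕ => Rtilde K k M N p α μ β δ ρ ι κ τ σ2 σRF2 (f N) (b N)) atTop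
      (nhds (Real.logb 2 (τ*ι^2*(M:ℝ)/(1-τ) + (1-ι^2*τ)/(1-τ)))) := by
  have hfk' : ∀ᶠ N in atTop, ‖f N k‖ = N := eventually_atTop.2 ⟨1, hfk⟩
  have hfiO (i : Fin K) (hi : i ≠ k) : (fun N => f N i) =O[atTop] natPow 0 :=
    isBigO_natPow_of_norm_le 0 (eventually_atTop.2 ⟨1, fun N hN => by simpa using hfi N hN i hi⟩)
  have hbiO (i : Fin K) (hi : i ≠ k) : (fun N => b N i) =O[atTop] natPow 1 :=
    isBigO_natPow_of_norm_le (c := 1) 1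
      (eventually_atTop.2 ⟨1, fun N hN => by simpa using hb_adm N hN i hi⟩)
  have hnum := (tendsto_xiK_div_pow_four M (α k) (μ k) β δ ρ ι κ hfk').const_mul (p k * τ ^ 2)
  simp only [← mul_div_assoc] at hnum
  have hden := tendsto_rate_denominator_div_pow_four k M p α μ β δ ρ ι κ τ σ2 σRF2 hfk' hfiO hbiO
  have hlimit := one_add_sinr_limit_eq (ι := ι) (hp k) (hα k) (hμ k) hβ hδ hρ.1 hκ.1 hτ.2 hM
  rw [← hlimit]
  exact tendsto_logb_one_add_div 2 4 hnum hden
    (rate_denominator_limit_pos (hp k) (hα k) (hμ k) hβ hδ hρ.1 hκ.1 hτ.1 hτ.2 hM).ne'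
    (hlimit ▸ (sinr_limit_add_one_pos hτ.1 hτ.2 hM).ne')

/-- Corollary 1: RIS aligned to user `k`; as `N → ∞` the closed-form
rate tends to `log₂(τι²M/(1−τ) + (1−ι²τ)/(1−τ))`. -/
theorem corollary1_aligned_N_to_infinity
    (K : ℕ) (hK : 2 ≤ K) (k : Fin K)
    (α μ : Fin K → ℝ) (β δ ρ ι κ τ σ2 σRF2 : ℝ)
    (hα : ∀ i, 0 < α i) (hμ : ∀ i, 0 < μ i)
    (hβ : 0 < β) (hδ : 0 < δ)
    (hρ : ρ ∈ Set.Ioo (0:ℝ) 1) (hι : ι ∈ Set.Ioc (0:ℝ) 1) (hκ : κ ∈ Set.Ioc (0:ℝ) 1)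
    (hτ : τ ∈ Set.Ioo (0:ℝ) 1) (hσ : 0 < σ2) (hσRF : 0 < σRF2)
    (p : Fin K → ℝ) (hp : ∀ i, 0 < p i)
    (M : ℕ) (hM : 0 < M)
    (f b : ℕ → Fin K → ℂ)
    (hf_adm : ∀ N, 1 ≤ N → ∀ i, ‖f N i‖ ≤ N)
    (hb_adm : ∀ N, 1 ≤ N → ∀ i, i ≠ k → ‖b N i‖ ≤ N)
    (hfk : ∀ N, 1 ≤ N → ‖f N k‖ = N)
    (C : ℝ) (hC : 0 < C)
    (hfi : ∀ N, 1 ≤ N → ∀ i, i ≠ k → ‖f N i‖ ≤ C) :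
    Tendsto (fun N : ℕ => Rtilde K k M N p α μ β δ ρ ι κ τ σ2 σRF2 (f N) (b N)) atTop
      (nhds (Real.logb 2 (τ*ι^2*(M:ℝ)/(1-τ) + (1-ι^2*τ)/(1-τ)))) :=
  corollary1_aligned_N_to_infinity_general K k α μ β δ ρ ι κ τ σ2 σRF2 hα hμ hβ hδ hρ hκ hτ p hp M
    hM f b hb_adm hfk C hfi

end
end

section
/- (Corollary 2: no user aligned, M, N → ∞.) Let (M_t) and (N_t) be sequences of positive integers tending to infinity, and for each t let f_1(t),…,f_K(t) and b_{ki}(t) (i ≠ k) be admissible data such that there is a constant C > 0 with |f_i(t)| ≤ C for all i and all t, and |b_{ki}(t)|/N_t → 0 for every i ≠ k. Then the closed-form rate satisfies R̃_k(M_t, N_t) → log₂( 1 + ((ρ²/δ²)(μ_k+δ+1)² + μ_k + 1 − ρ²μ_k) / ( Σ_{i≠k} (p_iα_i(μ_k+1)/(p_kα_k(μ_i+1)))·(μ_i + 1 − ρ²μ_i) ) ) as t → ∞. -/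
/-!
Divide the numerator and the denominator of the SINR inside `R̃_k` by `M²N²`. Each closed-form
coefficient is a polynomial in `N` whose coefficients are continuous in the `f_i`, hence bounded,
since the `f_i` stay in a compact ball; the terms involving `b_{ki}` are `o(N²)` because
`|b_{ki}| = o(N)`. So only the leading parts `ι²M²N²·c` of `ξ_k` and `γ_{ki}` survive, while the
ADC and noise terms are `O(MN²)`. The surviving leading coefficients share the factor
`p_k τ² ι² κ² β² α_k² δ² / ((δ+1)²(μ_k+1)²)`, which cancels in the ratio.
-/

open MeasureTheory ProbabilityTheory Filter Finset

noncomputable section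
open Topology

lemma add_one_sub_sq_mul_pos {ρ μ : ℝ} (hρ : ρ ^ 2 < 1) (hμ : 0 ≤ μ) : 0 < μ + 1 - ρ ^ 2 * μ := by
  nlinarith [mul_nonneg hμ (sub_pos.2 hρ).le]

section Asymptotics

variable {J : Type*} {l : Filter J}

lemma tendsto_comp_div_atTop_of_isCompact {X : Type*} [TopologicalSpace X] {S : Set X}
    (hS : IsCompact S) {P : X → ℝ} (hP : Continuous P) {x : J → X} (hx : ∀ j, x j ∈ S)
    {w : J → ℝ} (hw : Tendsto w l atTop) :
    Tendsto (fun j => P (x j) / w j) l (𝓝 0) := by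
  obtain ⟨D, hD⟩ := hS.exists_bound_of_continuousOn hP.continuousOn
  have hbdd : IsBoundedUnder (· ≤ ·) l (norm ∘ fun j => P (x j)) :=
    isBoundedUnder_of ⟨D, fun j => hD _ (hx j)⟩
  have hinv : Tendsto (fun j => (w j)⁻¹) l (𝓝 0) := tendsto_inv_atTop_zero.comp hw
  simpa only [div_eq_mul_inv] using isBoundedUnder_le_mul_tendsto_zero hbdd hinv

/-- The identity `hq` says that `q · z` is a quadratic polynomial with leading coefficient `a`. -/
lemma tendsto_div_sq_of_quadratic {X : Type*} [TopologicalSpace X] {S : Set X}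
    (hS : IsCompact S) {q : ℕ → X → ℝ} {a : ℝ}
    (hq : ∀ n z, q n z = a * n ^ 2 + (q 1 z - q 0 z - a) * n + q 0 z)
    (hq₀ : Continuous (q 0)) (hq₁ : Continuous (q 1)) {x : J → X} (hx : ∀ j, x j ∈ S)
    {N : J → ℕ} (hN : Tendsto N l atTop) :
    Tendsto (fun j => q (N j) (x j) / (N j : ℝ) ^ 2) l (𝓝 a) := by
  have hv : Tendsto (fun j => (N j : ℝ)) l atTop := tendsto_natCast_atTop_atTop.comp hN
  have hlin := tendsto_comp_div_atTop_of_isCompact hS (P := fun z => q 1 z - q 0 z - a)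
    ((hq₁.sub hq₀).sub continuous_const) hx hv
  have hv₂ : Tendsto (fun j => (N j : ℝ) ^ 2) l atTop := (tendsto_pow_atTop two_ne_zero).comp hv
  have hconst := tendsto_comp_div_atTop_of_isCompact hS hq₀ hx hv₂
  have hlim := (hlin.add hconst).const_add a
  rw [add_zero, add_zero] at hlim
  refine hlim.congr' ?_
  filter_upwards [hv.eventually_gt_atTop 0] with j hj
  rw [hq (N j) (x j)]
  field_simp
  ring

/-- The shape of `xiK` and `gammaKI` after unfolding. -/
lemma tendsto_div_sq_mul_sq {u v X Y Z : J → ℝ} {x : ℝ} (a d s c : ℝ) (hu : Tendsto u l atTop)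
    (hv : Tendsto v l atTop) (hX : Tendsto (fun j => X j / v j ^ 2) l (𝓝 x))
    (hY : Tendsto (fun j => Y j / v j) l (𝓝 0)) (hZ : Tendsto (fun j => Z j / v j ^ 2) l (𝓝 0)) :
    Tendsto (fun j => a * u j / d * (X j * s * u j + c * v j ^ 2 + Y j * v j + Z j)
      / (u j ^ 2 * v j ^ 2)) l (𝓝 (a / d * (x * s))) := by
  have hlower := ((tendsto_const_nhds (x := c)).add hY).add hZ
  have hlim := ((hX.mul_const s).add (hlower.mul (tendsto_inv_atTop_zero.comp hu))).const_mul (a / d)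
  simp only [add_zero, mul_zero] at hlim
  refine hlim.congr' ?_
  filter_upwards [hu.eventually_gt_atTop 0, hv.eventually_gt_atTop 0] with j hu hv
  simp only [Function.comp_apply]
  field_simp
  ring

lemma tendsto_affine_div {v Y : J → ℝ} (A c : ℝ) (hv : Tendsto v l atTop)
    (hY : Tendsto (fun j => Y j / v j) l (𝓝 0)) :
    Tendsto (fun j => A * (Y j + c * v j) / v j) l (𝓝 (A * c)) := by
  have hlim := (hY.add_const c).const_mul A
  rw [zero_add] at hlim
  refine hlim.congr' ?_
  filter_upwards [hv.eventually_gt_atTop 0] with j hj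
  field_simp

lemma tendsto_cross_div_sq {fk fi b : J → ℂ} {v : J → ℝ} {C : ℝ} (δ : ℝ)
    (hfk : ∀ j, ‖fk j‖ ≤ C) (hfi : ∀ j, ‖fi j‖ ≤ C) (hv : Tendsto v l atTop)
    (hb : Tendsto (fun j => ‖b j‖ / v j) l (𝓝 0)) :
    Tendsto (fun j => (‖b j‖ ^ 2 + 2 * δ *
      ((starRingEnd ℂ) (fk j) * fi j * (starRingEnd ℂ) (b j)).re) / v j ^ 2) l (𝓝 0) := by
  have hre : Tendsto (fun j =>
      ((starRingEnd ℂ) (fk j) * fi j * (starRingEnd ℂ) (b j)).re / v j ^ 2) l (𝓝 0) := by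
    have hinv : Tendsto (fun j => (v j)⁻¹) l (𝓝 0) := tendsto_inv_atTop_zero.comp hv
    have hbound := (hb.const_mul (C ^ 2)).mul hinv
    rw [mul_zero] at hbound
    refine squeeze_zero_norm' ?_ hbound
    filter_upwards [hv.eventually_gt_atTop 0] with j hj
    have hC : 0 ≤ C := (norm_nonneg _).trans (hfk j)
    have hprod : ‖(starRingEnd ℂ) (fk j) * fi j * (starRingEnd ℂ) (b j)‖ ≤ C * C * ‖b j‖ := by
      simp only [norm_mul, Complex.norm_conj]
      gcongr
      exacts [hfk j, hfi j]
    calc ‖((starRingEnd ℂ) (fk j) * fi j * (starRingEnd ℂ) (b j)).re / v j ^ 2‖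
        ≤ C * C * ‖b j‖ / v j ^ 2 := by
          rw [norm_div, Real.norm_eq_abs, norm_pow, Real.norm_of_nonneg hj.le]
          gcongr
          exact (Complex.abs_re_le_norm _).trans hprod
      _ = C ^ 2 * (‖b j‖ / v j) * (v j)⁻¹ := by field_simp
  have hlim := (hb.pow 2).add (hre.const_mul (2 * δ))
  rw [zero_pow two_ne_zero, mul_zero, add_zero] at hlim
  refine hlim.congr' ?_
  filter_upwards [hv.eventually_gt_atTop 0] with j hj
  field_simp

lemma tendsto_logb_one_add_div_s5 {n d w : J → ℝ} {G a b : ℝ} (hw : ∀ᶠ j in l, w j ≠ 0)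
    (hn : Tendsto (fun j => n j / w j) l (𝓝 (G * a)))
    (hd : Tendsto (fun j => d j / w j) l (𝓝 (G * b))) (hG : G ≠ 0) (hb : b ≠ 0)
    (hab : 1 + a / b ≠ 0) :
    Tendsto (fun j => Real.logb 2 (1 + n j / d j)) l (𝓝 (Real.logb 2 (1 + a / b))) := by
  have hratio : Tendsto (fun j => n j / d j) l (𝓝 (a / b)) := by
    rw [← mul_div_mul_left a b hG]
    exact (hn.div hd (mul_ne_zero hG hb)).congr'
      (hw.mono fun j hj => div_div_div_cancel_right₀ hj _ _)
  exact (Real.continuousAt_logb hab).tendsto.comp (hratio.const_add 1)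

end Asymptotics

section ClosedForm

variable {J : Type*} {l : Filter J} {M N : J → ℕ}

lemma tendsto_xiK_div {fk : J → ℂ} {C : ℝ} (αk μk β δ ρ ι κ : ℝ) (hM : Tendsto M l atTop)
    (hN : Tendsto N l atTop) (hfk : ∀ j, ‖fk j‖ ≤ C) :
    Tendsto (fun j => xiK (M j) (N j) αk μk β δ ρ ι κ (fk j) / ((M j : ℝ) ^ 2 * (N j : ℝ) ^ 2))
      l (𝓝 (β^2*αk^2*κ^2 / ((δ+1)^2*(μk+1)^2) *
        ((ρ^2*(μk+δ+1)^2 + (1-ρ^2)*δ^2*μk + δ^2) * ι^2))) := by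
  have hu : Tendsto (fun j => (M j : ℝ)) l atTop := tendsto_natCast_atTop_atTop.comp hM
  have hv : Tendsto (fun j => (N j : ℝ)) l atTop := tendsto_natCast_atTop_atTop.comp hN
  have hv₂ : Tendsto (fun j => (N j : ℝ) ^ 2) l atTop := (tendsto_pow_atTop two_ne_zero).comp hv
  have hS : IsCompact (Metric.closedBall (0 : ℂ) C) := isCompact_closedBall 0 C
  have hx : ∀ j, fk j ∈ Metric.closedBall (0 : ℂ) C := fun j => mem_closedBall_zero_iff.2 (hfk j)
  have hck1 : ∀ n, Continuous (ck1 n μk δ ρ) := fun n => by unfold ck1; fun_prop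
  exact tendsto_div_sq_mul_sq _ _ _ _ hu hv
    (tendsto_div_sq_of_quadratic hS (q := fun n => ck1 n μk δ ρ)
      (fun n z => by simp only [ck1]; push_cast; ring) (hck1 0) (hck1 1) hx hN)
    (tendsto_comp_div_atTop_of_isCompact hS (by unfold ck3; fun_prop) hx hv)
    (tendsto_comp_div_atTop_of_isCompact hS (by unfold ck4; fun_prop) hx hv₂)

lemma zki1_eq_zki1_zero_add (n : ℕ) (μk μi δ ρ : ℝ) (fk fi b : ℂ) :
    zki1 n μk μi δ ρ fk fi b = zki1 n μk μi δ ρ fk fi 0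
      + ρ^2*μi*μk * (‖b‖^2 + 2*δ*((starRingEnd ℂ) fk * fi * (starRingEnd ℂ) b).re) := by
  simp only [zki1, map_zero, mul_zero, Complex.zero_re, norm_zero]
  ring

lemma zki4_eq_zki4_zero_add (μk μi δ ρ ι : ℝ) (fk fi b : ℂ) :
    zki4 μk μi δ ρ ι fk fi b = zki4 μk μi δ ρ ι fk fi 0
      + (1-ι^2)*ρ^2*μk*μi * (‖b‖^2 + 2*δ*((starRingEnd ℂ) fk * fi * (starRingEnd ℂ) b).re) := by
  simp only [zki4, map_zero, mul_zero, Complex.zero_re, norm_zero]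
  ring

lemma tendsto_gammaKI_div {fk fi b : J → ℂ} {C : ℝ} (αk αi μk μi β δ ρ ι κ : ℝ)
    (hM : Tendsto M l atTop) (hN : Tendsto N l atTop) (hfk : ∀ j, ‖fk j‖ ≤ C)
    (hfi : ∀ j, ‖fi j‖ ≤ C) (hb : Tendsto (fun j => ‖b j‖ / (N j : ℝ)) l (𝓝 0)) :
    Tendsto (fun j => gammaKI (M j) (N j) αk αi μk μi β δ ρ ι κ (fk j) (fi j) (b j)
      / ((M j : ℝ) ^ 2 * (N j : ℝ) ^ 2))
      l (𝓝 (κ^2*β^2*αk*αi / ((δ+1)^2*(μk+1)*(μi+1)) * ((μi+1-ρ^2*μi)*δ^2 * ι^2))) := by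
  have hu : Tendsto (fun j => (M j : ℝ)) l atTop := tendsto_natCast_atTop_atTop.comp hM
  have hv : Tendsto (fun j => (N j : ℝ)) l atTop := tendsto_natCast_atTop_atTop.comp hN
  have hv₂ : Tendsto (fun j => (N j : ℝ) ^ 2) l atTop := (tendsto_pow_atTop two_ne_zero).comp hv
  have hS : IsCompact (Metric.closedBall (0 : ℂ) C ×ˢ Metric.closedBall (0 : ℂ) C) :=
    (isCompact_closedBall 0 C).prod (isCompact_closedBall 0 C)
  have hx : ∀ j, (fk j, fi j) ∈ Metric.closedBall (0 : ℂ) C ×ˢ Metric.closedBall (0 : ℂ) C :=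
    fun j => ⟨mem_closedBall_zero_iff.2 (hfk j), mem_closedBall_zero_iff.2 (hfi j)⟩
  have hcross := tendsto_cross_div_sq δ hfk hfi hv hb
  have hz₁ : Tendsto (fun j => zki1 (N j) μk μi δ ρ (fk j) (fi j) (b j) / (N j : ℝ) ^ 2) l
      (𝓝 ((μi+1-ρ^2*μi)*δ^2)) := by
    have hcont : ∀ n, Continuous fun z : ℂ × ℂ => zki1 n μk μi δ ρ z.1 z.2 0 :=
      fun n => by unfold zki1; fun_prop
    have hlim := (tendsto_div_sq_of_quadratic hS (q := fun n z => zki1 n μk μi δ ρ z.1 z.2 0)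
      (a := (μi+1-ρ^2*μi)*δ^2)
      (fun n z => by simp only [zki1]; push_cast; ring) (hcont 0) (hcont 1) hx hN).add
      (hcross.const_mul (ρ^2*μi*μk))
    rw [mul_zero, add_zero] at hlim
    refine hlim.congr fun j => ?_
    rw [zki1_eq_zki1_zero_add _ _ _ _ _ _ _ (b j)]
    ring
  have hz₄ : Tendsto (fun j => zki4 μk μi δ ρ ι (fk j) (fi j) (b j) / (N j : ℝ) ^ 2) l (𝓝 0) := by
    have hlim := (tendsto_comp_div_atTop_of_isCompact hS
      (P := fun z : ℂ × ℂ => zki4 μk μi δ ρ ι z.1 z.2 0) (by unfold zki4; fun_prop) hx hv₂).add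
      (hcross.const_mul ((1-ι^2)*ρ^2*μk*μi))
    rw [mul_zero, add_zero] at hlim
    refine hlim.congr fun j => ?_
    rw [zki4_eq_zki4_zero_add _ _ _ _ _ _ _ (b j)]
    ring
  exact tendsto_div_sq_mul_sq _ _ _ _ hu hv hz₁
    (tendsto_comp_div_atTop_of_isCompact hS (P := fun z : ℂ × ℂ => zki3 μk μi δ ρ ι z.1 z.2)
      (by unfold zki3; fun_prop) hx hv) hz₄

lemma tendsto_varpiK_div {fk : J → ℂ} {C : ℝ} (αk μk β δ : ℝ) (hN : Tendsto N l atTop)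
    (hfk : ∀ j, ‖fk j‖ ≤ C) :
    Tendsto (fun j => varpiK (N j) αk μk β δ (fk j) / (N j : ℝ)) l
      (𝓝 (β*αk/((δ+1)*(μk+1)) * (μk+δ+1))) := by
  have hv : Tendsto (fun j => (N j : ℝ)) l atTop := tendsto_natCast_atTop_atTop.comp hN
  exact tendsto_affine_div _ _ hv (tendsto_comp_div_atTop_of_isCompact (isCompact_closedBall 0 C)
    (P := fun z : ℂ => δ*μk*‖z‖^2) (by fun_prop) (fun j => mem_closedBall_zero_iff.2 (hfk j)) hv)

lemma tendsto_zetaV_div {K : ℕ} {f : J → Fin K → ℂ} {C : ℝ} (p α μ : Fin K → ℝ) (β δ ρ κ : ℝ)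
    (hN : Tendsto N l atTop) (hf : ∀ j s, ‖f j s‖ ≤ C) :
    Tendsto (fun j => zetaV K (N j) p α μ β δ ρ κ (f j) / (N j : ℝ)) l
      (𝓝 (∑ s, κ^2 * p s * β * α s / ((δ+1)*(μ s + 1)) * ((1-ρ^2)*δ*(μ s) + δ + μ s + 1))) := by
  have hv : Tendsto (fun j => (N j : ℝ)) l atTop := tendsto_natCast_atTop_atTop.comp hN
  simp only [zetaV, Finset.sum_div]
  exact tendsto_finsetSum _ fun s _ => tendsto_affine_div _ _ hv
    (tendsto_comp_div_atTop_of_isCompact (isCompact_closedBall 0 C)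
      (P := fun z : ℂ => ρ^2*δ*μ s*‖z‖^2) (by fun_prop)
      (fun j => mem_closedBall_zero_iff.2 (hf j s)) hv)

lemma tendsto_rtilde_denominator_div {K : ℕ} (k : Fin K) (p α μ : Fin K → ℝ)
    (β δ ρ ι κ τ σ2 σRF2 : ℝ) {f b : J → Fin K → ℂ} {C : ℝ} (hM : Tendsto M l atTop)
    (hN : Tendsto N l atTop) (hf : ∀ j s, ‖f j s‖ ≤ C)
    (hb : ∀ i, i ≠ k → Tendsto (fun j => ‖b j i‖ / (N j : ℝ)) l (𝓝 0)) :
    Tendsto (fun j =>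
      ((∑ i ∈ Finset.univ.erase k,
          p i * τ^2 * gammaKI (M j) (N j) (α k) (α i) (μ k) (μ i) β δ ρ ι κ (f j k) (f j i) (b j i))
        + τ*(1-τ) * varpiK (N j) (α k) (μ k) β δ (f j k) * zetaV K (N j) p α μ β δ ρ κ (f j)
          * (M j : ℝ)
        + τ*(σRF2+σ2) * varpiK (N j) (α k) (μ k) β δ (f j k) * (M j : ℝ))
      / ((M j : ℝ) ^ 2 * (N j : ℝ) ^ 2)) l
      (𝓝 (∑ i ∈ Finset.univ.erase k, p i * τ^2 *
        (κ^2*β^2*α k*α i / ((δ+1)^2*(μ k+1)*(μ i+1)) * ((μ i+1-ρ^2*μ i)*δ^2 * ι^2)))) := by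
  have hu : Tendsto (fun j => (M j : ℝ)) l atTop := tendsto_natCast_atTop_atTop.comp hM
  have hv : Tendsto (fun j => (N j : ℝ)) l atTop := tendsto_natCast_atTop_atTop.comp hN
  have hu' : Tendsto (fun j => (M j : ℝ)⁻¹) l (𝓝 0) := tendsto_inv_atTop_zero.comp hu
  have hv' : Tendsto (fun j => (N j : ℝ)⁻¹) l (𝓝 0) := tendsto_inv_atTop_zero.comp hv
  have hinterf := tendsto_finsetSum (Finset.univ.erase k) fun i hi =>
    (tendsto_gammaKI_div (α k) (α i) (μ k) (μ i) β δ ρ ι κ hM hN (hf · k) (hf · i)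
      (hb i (Finset.ne_of_mem_erase hi))).const_mul (p i * τ^2)
  have hϖ := tendsto_varpiK_div (α k) (μ k) β δ hN (hf · k)
  have hζ := tendsto_zetaV_div p α μ β δ ρ κ hN hf
  have hquant := ((hϖ.const_mul (τ*(1-τ))).mul hζ).mul hu'
  have hthermal := ((hϖ.const_mul (τ*(σRF2+σ2))).mul hv').mul hu'
  have hlim := (hinterf.add hquant).add hthermal
  simp only [mul_zero, add_zero] at hlim
  refine hlim.congr' ?_
  filter_upwards [hu.eventually_gt_atTop 0, hv.eventually_gt_atTop 0] with j hMj hNj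
  simp only [add_div, Finset.sum_div, mul_div_assoc]
  congr 1
  · congr 1
    field_simp
  · field_simp

end ClosedForm

theorem corollary2_no_alignment_MN_to_infinity_general
    (K : ℕ) (hK : 2 ≤ K) (k : Fin K)
    (α μ : Fin K → ℝ) (β δ ρ ι κ τ σ2 σRF2 : ℝ)
    (hα : ∀ i, 0 < α i) (hμ : ∀ i, 0 < μ i)
    (hβ : 0 < β) (hδ : 0 < δ)
    (hρ : ρ ∈ Set.Ioo (0:ℝ) 1) (hι : ι ∈ Set.Ioc (0:ℝ) 1) (hκ : κ ∈ Set.Ioc (0:ℝ) 1)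
    (hτ : τ ∈ Set.Ioo (0:ℝ) 1)
    (p : Fin K → ℝ) (hp : ∀ i, 0 < p i)
    (Mt Nt : ℕ → ℕ) (hMt : Tendsto Mt atTop atTop) (hNt : Tendsto Nt atTop atTop)
    (f b : ℕ → Fin K → ℂ)
    (C : ℝ) (hfC : ∀ t i, ‖f t i‖ ≤ C)
    (hb0 : ∀ i, i ≠ k →
      Tendsto (fun t => ‖b t i‖ / (Nt t : ℝ)) atTop (nhds 0)) :
    Tendsto (fun t : ℕ =>
        Rtilde K k (Mt t) (Nt t) p α μ β δ ρ ι κ τ σ2 σRF2 (f t) (b t)) atTop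
      (nhds (Real.logb 2 (1 +
        ((ρ^2/δ^2)*(μ k+δ+1)^2 + μ k + 1 - ρ^2*μ k) /
        (∑ i ∈ Finset.univ.erase k,
          (p i * α i * (μ k+1)/(p k * α k * (μ i+1))) * (μ i + 1 - ρ^2 * μ i))))) := by
  obtain ⟨hρ₀, hρ₁⟩ := hρ
  obtain ⟨hι₀, -⟩ := hι
  obtain ⟨hκ₀, -⟩ := hκ
  obtain ⟨hτ₀, -⟩ := hτ
  have hρ₂ : ρ^2 < 1 := by nlinarith
  have hpk := hp k
  have hαk := hα k
  have hμk := hμ k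
  have hX : 0 < (ρ^2/δ^2)*(μ k+δ+1)^2 + μ k + 1 - ρ^2*μ k := by
    linarith [add_one_sub_sq_mul_pos hρ₂ hμk.le, (by positivity : 0 ≤ (ρ^2/δ^2)*(μ k+δ+1)^2)]
  have hsum : 0 < ∑ i ∈ Finset.univ.erase k,
      (p i * α i * (μ k+1)/(p k * α k * (μ i+1))) * (μ i + 1 - ρ^2 * μ i) := by
    refine Finset.sum_pos (fun i _ => mul_pos ?_ (add_one_sub_sq_mul_pos hρ₂ (hμ i).le))
      (Finset.univ_nontrivial_iff.2 (Fin.nontrivial_iff_two_le.2 hK)).erase_nonempty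
    have hpi := hp i
    have hαi := hα i
    have hμi := hμ i
    positivity
  unfold Rtilde
  refine tendsto_logb_one_add_div_s5 (w := fun t => (Mt t : ℝ) ^ 2 * (Nt t : ℝ) ^ 2)
    (G := p k * τ^2 * κ^2 * β^2 * α k^2 * ι^2 * δ^2 / ((δ+1)^2*(μ k+1)^2))
    ?_ ?_ ?_ (by positivity) hsum.ne' (by positivity)
  · filter_upwards [hMt.eventually_gt_atTop 0, hNt.eventually_gt_atTop 0] with t hM hN
    positivity
  · convert (tendsto_xiK_div (α k) (μ k) β δ ρ ι κ hMt hNt (hfC · k)).const_mul (p k * τ^2)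
      using 1
    · simp only [mul_div_assoc]
    · congr 1
      field_simp
      ring
  · convert tendsto_rtilde_denominator_div k p α μ β δ ρ ι κ τ σ2 σRF2 hMt hNt hfC hb0 using 2
    rw [Finset.mul_sum]
    refine Finset.sum_congr rfl fun i _ => ?_
    have hμi := hμ i
    field_simp

/-- Corollary 2: no user aligned; as `M, N → ∞` the closed-form rate
converges. -/
theorem corollary2_no_alignment_MN_to_infinity
    (K : ℕ) (hK : 2 ≤ K) (k : Fin K)
    (α μ : Fin K → ℝ) (β δ ρ ι κ τ σ2 σRF2 : ℝ)
    (hα : ∀ i, 0 < α i) (hμ : ∀ i, 0 < μ i)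
    (hβ : 0 < β) (hδ : 0 < δ)
    (hρ : ρ ∈ Set.Ioo (0:ℝ) 1) (hι : ι ∈ Set.Ioc (0:ℝ) 1) (hκ : κ ∈ Set.Ioc (0:ℝ) 1)
    (hτ : τ ∈ Set.Ioo (0:ℝ) 1) (hσ : 0 < σ2) (hσRF : 0 < σRF2)
    (p : Fin K → ℝ) (hp : ∀ i, 0 < p i)
    (Mt Nt : ℕ → ℕ) (hMt : Tendsto Mt atTop atTop) (hNt : Tendsto Nt atTop atTop)
    (f b : ℕ → Fin K → ℂ)
    (hf_adm : ∀ t i, ‖f t i‖ ≤ Nt t)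
    (hb_adm : ∀ t, ∀ i, i ≠ k → ‖b t i‖ ≤ Nt t)
    (C : ℝ) (hC : 0 < C) (hfC : ∀ t i, ‖f t i‖ ≤ C)
    (hb0 : ∀ i, i ≠ k →
      Tendsto (fun t => ‖b t i‖ / (Nt t : ℝ)) atTop (nhds 0)) :
    Tendsto (fun t : ℕ =>
        Rtilde K k (Mt t) (Nt t) p α μ β δ ρ ι κ τ σ2 σRF2 (f t) (b t)) atTop
      (nhds (Real.logb 2 (1 +
        ((ρ^2/δ^2)*(μ k+δ+1)^2 + μ k + 1 - ρ^2*μ k) /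
        (∑ i ∈ Finset.univ.erase k,
          (p i * α i * (μ k+1)/(p k * α k * (μ i+1))) * (μ i + 1 - ρ^2 * μ i))))) :=
  corollary2_no_alignment_MN_to_infinity_general K hK k α μ β δ ρ ι κ τ σ2 σRF2 hα hμ hβ hδ hρ hι hκ
    hτ p hp Mt Nt hMt hNt f b C hfC hb0

end
end

section
/- (Power scaling law in M.) Fix N, the complex data f_1,…,f_K and b_{ki}, and all real parameters except the powers, and for ε ≥ 0 and fixed E_u > 0 set p_i = E_u/M^ε for every i. Define Γ_k = τ²ι²κ²β²α_k²·c_{k,1}/((δ+1)²(μ_k+1)²) and, for i ≠ k, Γ_ki = τ²ι²κ²β²α_kα_i·z_{ki,1}/((δ+1)²(μ_k+1)(μ_i+1)). Then as M → ∞: (i) if ε > 1, R̃_k → 0; (ii) if ε = 1, R̃_k → log₂(1 + E_uΓ_k/(Σ_{i≠k} E_uΓ_ki + (σ_RF²+σ²)τϖ_k)); (iii) if 0 ≤ ε < 1 and Σ_{i≠k} Γ_ki > 0, then R̃_k → log₂(1 + Γ_k/Σ_{i≠k} Γ_ki). -/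
/-!
At a constant transmit power `P` every second moment in `R̃_k` is polynomial in `M`: signal and
interference are `P (Γ M² + O(M)) / τ²`, the ADC distortion is `O(P M)` and the thermal noise
`O(M)`. Dividing by `P M²` turns the SINR into
`(Γ_k + O(1/M)) / (Σ_{i≠k} Γ_ki + O(1/M) + τ (σ_RF² + σ²) ϖ_k / (P M))`,
and for `P = E_u / M^ε` the last term is a positive multiple of `M^(ε-1)`, which diverges, stays
constant or vanishes according as `ε > 1`, `ε = 1` or `ε < 1`. The limits of the logarithm are
then justified by `Γ_k, Γ_ki ≥ 0`, which hold because the paper's coefficients `c_{k,1}` and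
`z_{ki,1}` are sums of nonnegative terms once `N ≤ N²` and a perfect square in `b_ki` are used.
-/

open MeasureTheory ProbabilityTheory Filter Finset

noncomputable section
open Real Topology

theorem ck1_nonneg {μk δ ρ : ℝ} (hμk : 0 ≤ μk) (hδ : 0 ≤ δ) (hρ : ρ ^ 2 ≤ 1)
    (N : ℕ) (fk : ℂ) : 0 ≤ ck1 N μk δ ρ fk := by
  have ht : 0 ≤ 1 - ρ ^ 2 := by linarith
  have hN : (N : ℝ) ≤ N ^ 2 := by exact_mod_cast Nat.le_self_pow two_ne_zero N
  have hN' : 0 ≤ (N : ℝ) ^ 2 - N := by linarith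
  have hdecomp : ck1 N μk δ ρ fk =
      ρ^2*(μk+δ+1)^2*((N:ℝ)^2 - N) + ((1-ρ^2)*δ^2*μk + δ^2)*N^2
      + ((2*μk+3*δ+2)*ρ^2 + δ + δ*μk*(1-ρ^2))*δ*μk*‖fk‖^2*N
      + (μk^2+δ^2+4*μk+4*δ+2+2*(1-ρ^2)*δ*μk)*N
      + ρ^2*δ^2*μk^2*‖fk‖^4 + 2*((1-ρ^2)*(μk+δ)+2)*δ*μk*‖fk‖^2 := by
    rw [ck1]; ring
  rw [hdecomp]
  positivity

theorem sq_norm_add_ofReal_mul_conj_mul (b w z : ℂ) (δ : ℝ) :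
    ‖b + δ * (starRingEnd ℂ w * z)‖ ^ 2
      = ‖b‖ ^ 2 + 2 * δ * (starRingEnd ℂ w * z * starRingEnd ℂ b).re
        + δ ^ 2 * ‖w‖ ^ 2 * ‖z‖ ^ 2 := by
  rw [Complex.sq_norm, Complex.normSq_add, Complex.normSq_eq_norm_sq, Complex.normSq_eq_norm_sq]
  simp only [norm_mul, Complex.norm_real, Complex.norm_conj, Real.norm_eq_abs, mul_pow, sq_abs]
  have hre : (b * starRingEnd ℂ (δ * (starRingEnd ℂ w * z))).re
      = δ * (starRingEnd ℂ w * z * starRingEnd ℂ b).re := by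
    simp only [map_mul, Complex.conj_ofReal, Complex.conj_conj, Complex.mul_re, Complex.mul_im,
      Complex.conj_re, Complex.conj_im, Complex.ofReal_re, Complex.ofReal_im]
    ring
  rw [hre]; ring

theorem zki1_nonneg {μk μi δ ρ : ℝ} (hμk : 0 ≤ μk) (hμi : 0 ≤ μi) (hδ : 0 ≤ δ)
    (hρ : ρ ^ 2 ≤ 1) (N : ℕ) (fk fi bki : ℂ) : 0 ≤ zki1 N μk μi δ ρ fk fi bki := by
  have ht : 0 ≤ 1 - ρ ^ 2 := by linarith
  have hdecomp : zki1 N μk μi δ ρ fk fi bki =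
      (1 + (1-ρ^2)*μi) * δ^2 * N^2
      + ((1 + (1-ρ^2)*μi)*δ^2*μk*‖fk‖^2 + ρ^2*δ^2*μi*‖fi‖^2
        + (μk+2*δ+1)*(1 + (1-ρ^2)*μi) + ρ^2*μi) * N
      + 2*δ*‖fi‖^2*ρ^2*μi + (2*μi*(1-ρ^2)+2)*δ*μk*‖fk‖^2
      + ρ^2*μi*μk * ‖bki + δ * ((starRingEnd ℂ) fk * fi)‖ ^ 2 := by
    rw [zki1, sq_norm_add_ofReal_mul_conj_mul]; ring
  rw [hdecomp]
  positivity

theorem varpiK_pos {N : ℕ} {αk μk β δ : ℝ} (hN : 0 < N) (hαk : 0 < αk) (hμk : 0 ≤ μk)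
    (hβ : 0 < β) (hδ : 0 ≤ δ) (fk : ℂ) : 0 < varpiK N αk μk β δ fk := by
  rw [varpiK]
  positivity

theorem GammaK_nonneg {μk δ ρ : ℝ} (hμk : 0 ≤ μk) (hδ : 0 ≤ δ) (hρ : ρ ^ 2 ≤ 1)
    (N : ℕ) (αk β ι κ τ : ℝ) (fk : ℂ) : 0 ≤ GammaK N αk μk β δ ρ ι κ τ fk := by
  have := ck1_nonneg hμk hδ hρ N fk
  rw [GammaK]
  positivity

theorem GammaKI_nonneg {αk αi μk μi δ ρ : ℝ} (hαk : 0 ≤ αk) (hαi : 0 ≤ αi)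
    (hμk : 0 ≤ μk) (hμi : 0 ≤ μi) (hδ : 0 ≤ δ) (hρ : ρ ^ 2 ≤ 1) (N : ℕ) (β ι κ τ : ℝ)
    (fk fi bki : ℂ) : 0 ≤ GammaKI N αk αi μk μi β δ ρ ι κ τ fk fi bki := by
  have := zki1_nonneg hμk hμi hδ hρ N fk fi bki
  rw [GammaKI]
  positivity

theorem zetaV_const_power (K N : ℕ) (P : ℝ) (α μ : Fin K → ℝ) (β δ ρ κ : ℝ) (f : Fin K → ℂ) :
    zetaV K N (fun _ => P) α μ β δ ρ κ f = P * zetaV K N (fun _ => 1) α μ β δ ρ κ f := by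
  simp only [zetaV, Finset.mul_sum]
  exact Finset.sum_congr rfl fun s _ => by ring

theorem exists_sq_mul_xiK_eq (N : ℕ) (αk μk β δ ρ ι κ τ : ℝ) (fk : ℂ) :
    ∃ a : ℝ, ∀ M : ℕ,
      τ ^ 2 * xiK M N αk μk β δ ρ ι κ fk = GammaK N αk μk β δ ρ ι κ τ fk * M ^ 2 + a * M :=
  ⟨τ^2*β^2*αk^2*κ^2/((δ+1)^2*(μk+1)^2)
      * (ck2 μk δ ρ ι * N^2 + ck3 μk δ ρ ι fk * N + ck4 μk δ ρ ι fk),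
    fun M => by rw [xiK, GammaK]; ring⟩

theorem exists_sq_mul_gammaKI_eq (N : ℕ) (αk αi μk μi β δ ρ ι κ τ : ℝ) (fk fi bki : ℂ) :
    ∃ a : ℝ, ∀ M : ℕ, τ ^ 2 * gammaKI M N αk αi μk μi β δ ρ ι κ fk fi bki
      = GammaKI N αk αi μk μi β δ ρ ι κ τ fk fi bki * M ^ 2 + a * M :=
  ⟨τ^2*κ^2*β^2*αk*αi/((δ+1)^2*(μk+1)*(μi+1))
      * (zki2 μk μi δ ρ ι * N^2 + zki3 μk μi δ ρ ι fk fi * N + zki4 μk μi δ ρ ι fk fi bki),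
    fun M => by rw [gammaKI, GammaKI]; ring⟩

theorem exists_Rtilde_const_power_eq (K : ℕ) (k : Fin K) (N : ℕ) (α μ : Fin K → ℝ)
    (β δ ρ ι κ τ σ2 σRF2 : ℝ) (f b : Fin K → ℂ) :
    ∃ a c : ℝ, ∀ (M : ℕ) (P : ℝ), M ≠ 0 → P ≠ 0 →
      Rtilde K k M N (fun _ => P) α μ β δ ρ ι κ τ σ2 σRF2 f b =
        logb 2 (1 + (GammaK N (α k) (μ k) β δ ρ ι κ τ (f k) + a / M) /
          ((∑ i ∈ Finset.univ.erase k,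
              GammaKI N (α k) (α i) (μ k) (μ i) β δ ρ ι κ τ (f k) (f i) (b i)) + c / M
            + τ * (σRF2 + σ2) * varpiK N (α k) (μ k) β δ (f k) / (P * M))) := by
  obtain ⟨a, ha⟩ := exists_sq_mul_xiK_eq N (α k) (μ k) β δ ρ ι κ τ (f k)
  choose c hc using fun i =>
    exists_sq_mul_gammaKI_eq N (α k) (α i) (μ k) (μ i) β δ ρ ι κ τ (f k) (f i) (b i)
  refine ⟨a, ∑ i ∈ Finset.univ.erase k, c i
      + τ * (1 - τ) * varpiK N (α k) (μ k) β δ (f k) * zetaV K N (fun _ => 1) α μ β δ ρ κ f,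
    fun M P hM hP => ?_⟩
  have hM' : (M : ℝ) ≠ 0 := Nat.cast_ne_zero.mpr hM
  have hsignal : P * τ ^ 2 * xiK M N (α k) (μ k) β δ ρ ι κ (f k)
      = P * M ^ 2 * (GammaK N (α k) (μ k) β δ ρ ι κ τ (f k) + a / M) := by
    rw [mul_assoc, ha]; field_simp
  have hinterference : ∑ i ∈ Finset.univ.erase k,
      P * τ ^ 2 * gammaKI M N (α k) (α i) (μ k) (μ i) β δ ρ ι κ (f k) (f i) (b i)
      = P * M ^ 2 * ∑ i ∈ Finset.univ.erase k,
          (GammaKI N (α k) (α i) (μ k) (μ i) β δ ρ ι κ τ (f k) (f i) (b i) + c i / M) := by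
    rw [Finset.mul_sum]
    refine Finset.sum_congr rfl fun i _ => ?_
    rw [mul_assoc, hc]; field_simp
  rw [Rtilde, zetaV_const_power, hsignal, hinterference, Finset.sum_add_distrib,
    ← Finset.sum_div]
  congr 2
  symm
  rw [← mul_div_mul_left _ _ (mul_ne_zero hP (pow_ne_zero 2 hM'))]
  congr 1
  field_simp
  ring

section Limits

variable {s a g c L : ℝ} {h : ℕ → ℝ}

theorem tendsto_logb_one_add_ratio (b : ℝ) (hh : Tendsto h atTop (𝓝 L)) (hs : 0 ≤ s)
    (hgL : 0 < g + L) :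
    Tendsto (fun M : ℕ => logb b (1 + (s + a / M) / (g + c / M + h M))) atTop
      (𝓝 (logb b (1 + s / (g + L)))) := by
  have hquot := ((tendsto_const_div_atTop_nhds_zero_nat a).const_add s).div
    (((tendsto_const_div_atTop_nhds_zero_nat c).const_add g).add hh) (by simpa using hgL.ne')
  simp only [add_zero] at hquot
  exact (continuousAt_logb (by positivity)).tendsto.comp (hquot.const_add 1)

theorem tendsto_logb_one_add_ratio_of_tendsto_atTop (b : ℝ) (hh : Tendsto h atTop atTop) :
    Tendsto (fun M : ℕ => logb b (1 + (s + a / M) / (g + c / M + h M))) atTop (𝓝 0) := by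
  have hquot := ((tendsto_const_div_atTop_nhds_zero_nat a).const_add s).div_atTop
    (((tendsto_const_div_atTop_nhds_zero_nat c).const_add g).add_atTop hh)
  have hone := hquot.const_add 1
  rw [add_zero] at hone
  rw [← logb_one (b := b)]
  exact (continuousAt_logb one_ne_zero).tendsto.comp hone

end Limits

theorem power_scaling_law_in_M_general
    (K : ℕ) (k : Fin K)
    (α μ : Fin K → ℝ) (β δ ρ ι κ τ σ2 σRF2 : ℝ)
    (hα : ∀ i, 0 < α i) (hμ : ∀ i, 0 < μ i)
    (hβ : 0 < β) (hδ : 0 < δ)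
    (hρ : ρ ∈ Set.Ioo (0:ℝ) 1)
    (hτ : τ ∈ Set.Ioo (0:ℝ) 1) (hσ : 0 < σ2) (hσRF : 0 < σRF2)
    (N : ℕ) (hN : 0 < N)
    (f b : Fin K → ℂ)
    (Eu e : ℝ) (hEu : 0 < Eu) :
    (e > 1 →
      Tendsto (fun M : ℕ =>
          Rtilde K k M N (fun _ => Eu/(M:ℝ)^e) α μ β δ ρ ι κ τ σ2 σRF2 f b)
        atTop (nhds 0)) ∧
    (e = 1 →
      Tendsto (fun M : ℕ =>
          Rtilde K k M N (fun _ => Eu/(M:ℝ)^e) α μ β δ ρ ι κ τ σ2 σRF2 f b)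
        atTop (nhds (Real.logb 2 (1 +
          Eu * GammaK N (α k) (μ k) β δ ρ ι κ τ (f k) /
          ((∑ i ∈ Finset.univ.erase k,
              Eu * GammaKI N (α k) (α i) (μ k) (μ i) β δ ρ ι κ τ (f k) (f i) (b i))
           + (σRF2+σ2) * τ * varpiK N (α k) (μ k) β δ (f k)))))) ∧
    (e < 1 →
      0 < (∑ i ∈ Finset.univ.erase k,
            GammaKI N (α k) (α i) (μ k) (μ i) β δ ρ ι κ τ (f k) (f i) (b i)) →
      Tendsto (fun M : ℕ =>
          Rtilde K k M N (fun _ => Eu/(M:ℝ)^e) α μ β δ ρ ι κ τ σ2 σRF2 f b)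
        atTop (nhds (Real.logb 2 (1 +
          GammaK N (α k) (μ k) β δ ρ ι κ τ (f k) /
          (∑ i ∈ Finset.univ.erase k,
            GammaKI N (α k) (α i) (μ k) (μ i) β δ ρ ι κ τ (f k) (f i) (b i)))))) := by
  obtain ⟨a, c, hR⟩ := exists_Rtilde_const_power_eq K k N α μ β δ ρ ι κ τ σ2 σRF2 f b
  set S := ∑ i ∈ Finset.univ.erase k,
    GammaKI N (α k) (α i) (μ k) (μ i) β δ ρ ι κ τ (f k) (f i) (b i) with hSdef
  set w := τ * (σRF2 + σ2) * varpiK N (α k) (μ k) β δ (f k) / Eu with hw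
  have hρ2 : ρ ^ 2 ≤ 1 := pow_le_one₀ hρ.1.le hρ.2.le
  have hΓ := GammaK_nonneg (hμ k).le hδ.le hρ2 N (α k) β ι κ τ (f k)
  have hS : 0 ≤ S := Finset.sum_nonneg fun i _ =>
    GammaKI_nonneg (hα k).le (hα i).le (hμ k).le (hμ i).le hδ.le hρ2 N β ι κ τ (f k) (f i) (b i)
  have hϖ := varpiK_pos hN (hα k) (hμ k).le hβ hδ.le (f k)
  have hτ0 := hτ.1
  have hrate : (fun M : ℕ => logb 2 (1 + (GammaK N (α k) (μ k) β δ ρ ι κ τ (f k) + a / M) /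
        (S + c / M + w * (M : ℝ) ^ (e - 1))))
      =ᶠ[atTop] fun M : ℕ =>
        Rtilde K k M N (fun _ => Eu/(M:ℝ)^e) α μ β δ ρ ι κ τ σ2 σRF2 f b := by
    filter_upwards [eventually_gt_atTop 0] with M hM
    have hM' : (0 : ℝ) < M := Nat.cast_pos.mpr hM
    rw [hR M _ hM.ne' (by positivity), rpow_sub_one hM'.ne', hw]
    field_simp
  refine ⟨fun he => ?_, fun he => ?_, fun he hSpos => ?_⟩
  · exact (tendsto_logb_one_add_ratio_of_tendsto_atTop 2
      (((tendsto_rpow_atTop (by linarith)).comp tendsto_natCast_atTop_atTop).const_mul_atTop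
        (by positivity))).congr' hrate
  · subst he
    convert (tendsto_logb_one_add_ratio 2 (L := w) (by simp) hΓ (by positivity)).congr' hrate
      using 3
    rw [← Finset.mul_sum, ← hSdef, hw]
    field_simp
  · have hpow : Tendsto (fun M : ℕ => w * (M : ℝ) ^ (e - 1)) atTop (𝓝 0) := by
      simpa [neg_sub] using ((tendsto_rpow_neg_atTop (by linarith : 0 < 1 - e)).comp
        tendsto_natCast_atTop_atTop).const_mul w
    simpa using (tendsto_logb_one_add_ratio 2 hpow hΓ (by simpa using hSpos)).congr' hrate

/-- power scaling law in `M`, eq. (26): with `p_i = E_u/M^ε` the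
closed-form rate converges as `M → ∞`, with limit depending on the scaling factor `ε`. -/
theorem power_scaling_law_in_M
    (K : ℕ) (hK : 2 ≤ K) (k : Fin K)
    (α μ : Fin K → ℝ) (β δ ρ ι κ τ σ2 σRF2 : ℝ)
    (hα : ∀ i, 0 < α i) (hμ : ∀ i, 0 < μ i)
    (hβ : 0 < β) (hδ : 0 < δ)
    (hρ : ρ ∈ Set.Ioo (0:ℝ) 1) (hι : ι ∈ Set.Ioc (0:ℝ) 1) (hκ : κ ∈ Set.Ioc (0:ℝ) 1)
    (hτ : τ ∈ Set.Ioo (0:ℝ) 1) (hσ : 0 < σ2) (hσRF : 0 < σRF2)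
    (N : ℕ) (hN : 0 < N)
    (f b : Fin K → ℂ)
    (hf_adm : ∀ i, ‖f i‖ ≤ N)
    (hb_adm : ∀ i, i ≠ k → ‖b i‖ ≤ N)
    (Eu e : ℝ) (hEu : 0 < Eu) (he : 0 ≤ e) :
    (e > 1 →
      Tendsto (fun M : ℕ =>
          Rtilde K k M N (fun _ => Eu/(M:ℝ)^e) α μ β δ ρ ι κ τ σ2 σRF2 f b)
        atTop (nhds 0)) ∧
    (e = 1 →
      Tendsto (fun M : ℕ =>
          Rtilde K k M N (fun _ => Eu/(M:ℝ)^e) α μ β δ ρ ι κ τ σ2 σRF2 f b)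
        atTop (nhds (Real.logb 2 (1 +
          Eu * GammaK N (α k) (μ k) β δ ρ ι κ τ (f k) /
          ((∑ i ∈ Finset.univ.erase k,
              Eu * GammaKI N (α k) (α i) (μ k) (μ i) β δ ρ ι κ τ (f k) (f i) (b i))
           + (σRF2+σ2) * τ * varpiK N (α k) (μ k) β δ (f k)))))) ∧
    (e < 1 →
      0 < (∑ i ∈ Finset.univ.erase k,
            GammaKI N (α k) (α i) (μ k) (μ i) β δ ρ ι κ τ (f k) (f i) (b i)) →
      Tendsto (fun M : ℕ =>
          Rtilde K k M N (fun _ => Eu/(M:ℝ)^e) α μ β δ ρ ι κ τ σ2 σRF2 f b)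
        atTop (nhds (Real.logb 2 (1 +
          GammaK N (α k) (μ k) β δ ρ ι κ τ (f k) /
          (∑ i ∈ Finset.univ.erase k,
            GammaKI N (α k) (α i) (μ k) (μ i) β δ ρ ι κ τ (f k) (f i) (b i)))))) :=
  power_scaling_law_in_M_general K k α μ β δ ρ ι κ τ σ2 σRF2 hα hμ hβ hδ hρ hτ hσ hσRF N hN f b Eu e
    hEu
end
end

section
/- Let ε_1, …, ε_N be i.i.d. real random variables such that ρ := E[e^{iε_1}] is a real number, let φ_1, …, φ_M be i.i.d. real random variables, independent of (ε_n), such that ι := E[e^{iφ_1}] is a real number, let f_1, …, f_N be complex numbers with |f_n| = 1 for every n, and let g be any complex number. Then E[|g · (Σ_{m=1}^M e^{iφ_m}) · (Σ_{n=1}^N f_n·e^{iε_n})|²] = |g|² · M·(ι²M + 1 − ι²) · ((1−ρ²)·N + ρ²·|Σ_{n=1}^N f_n|²). -/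
/-! The two phase sums `A = Σ_m e^{iφ_m}` and `B = Σ_n f_n e^{iε_n}` are functions of
independent blocks of variables, so `E|gAB|² = |g|² E|A|² E|B|²`. For unimodular, pairwise
independent `Z_k` with common mean `z`, `E[Z_k · conj Z_l]` is `1` on the diagonal and `|z|²` off
it, hence `E|Σ_k c_k Z_k|² = (1 - |z|²) Σ_k |c_k|² + |z|² |Σ_k c_k|²`; take `c = f` for `B` and
`c = 1` for `A`. -/

open MeasureTheory ProbabilityTheory Finset ComplexConjugate

theorem ProbabilityTheory.iIndepFun.indepFun_sumElim {Ω ι κ β : Type*} {mΩ : MeasurableSpace Ω}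
    {μ : Measure Ω} [Fintype ι] [Fintype κ] [MeasurableSpace β]
    {X : ι → Ω → β} {Y : κ → Ω → β} (h : iIndepFun (Sum.elim X Y) μ)
    (hX : ∀ i, Measurable (X i)) (hY : ∀ k, Measurable (Y k)) :
    IndepFun (fun ω i => X i ω) (fun ω k => Y k ω) μ := by
  have hST : Disjoint (univ.map .inl) (univ.map .inr : Finset (ι ⊕ κ)) := by
    simp [Finset.disjoint_left]
  refine (h.indepFun_finset _ _ hST (Sum.forall.2 ⟨hX, hY⟩)).comp
    (φ := fun x i => x ⟨.inl i, by simp⟩) (ψ := fun x k => x ⟨.inr k, by simp⟩) ?_ ?_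
  · exact measurable_pi_lambda _ fun i => measurable_pi_apply _
  · exact measurable_pi_lambda _ fun k => measurable_pi_apply _

section PhaseSums

variable {Ω κ : Type*} {mΩ : MeasurableSpace Ω} {μ : Measure Ω} [IsProbabilityMeasure μ]

lemma integral_mul_conj_of_pairwise_indepFun [DecidableEq κ] {Z : κ → Ω → ℂ}
    (hZ : ∀ k, AEStronglyMeasurable (Z k) μ) (hnorm : ∀ k ω, ‖Z k ω‖ = 1)
    (hindep : Pairwise fun k l => IndepFun (Z k) (Z l) μ) {z : ℂ}
    (hmean : ∀ k, ∫ ω, Z k ω ∂μ = z) (k l : κ) :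
    ∫ ω, Z k ω * conj (Z l ω) ∂μ = if k = l then 1 else (‖z‖ ^ 2 : ℂ) := by
  split_ifs with hkl
  · subst hkl
    simp [Complex.mul_conj', hnorm]
  · have hconj := (hindep hkl).comp measurable_id Complex.continuous_conj.measurable
    have := hconj.integral_fun_mul_eq_mul_integral (hZ k)
      (Complex.continuous_conj.comp_aestronglyMeasurable (hZ l))
    simp only [Function.comp_apply, id] at this
    rw [this, integral_conj, hmean, hmean, Complex.mul_conj']

lemma sum_sum_mul_conj_mul_ite [Fintype κ] [DecidableEq κ] (c : κ → ℂ) (w : ℂ) :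
    ∑ k : κ, ∑ l : κ, c k * conj (c l) * (if k = l then 1 else w)
      = (1 - w) * ∑ k, c k * conj (c k) + w * ((∑ k, c k) * conj (∑ k, c k)) := by
  have hsplit : ∀ k l : κ, (if k = l then (1 : ℂ) else w) = w + if k = l then 1 - w else 0 := by
    intro k l; split_ifs <;> ring
  simp only [hsplit, mul_add, mul_ite, mul_zero, Finset.sum_add_distrib, Finset.sum_ite_eq,
    Finset.mem_univ, if_true, map_sum, Finset.sum_mul_sum, ← Finset.sum_mul]
  ring

theorem integral_norm_sum_mul_sq_of_pairwise_indepFun [Fintype κ] {Z : κ → Ω → ℂ}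
    (hZ : ∀ k, AEStronglyMeasurable (Z k) μ) (hnorm : ∀ k ω, ‖Z k ω‖ = 1)
    (hindep : Pairwise fun k l => IndepFun (Z k) (Z l) μ) {z : ℂ}
    (hmean : ∀ k, ∫ ω, Z k ω ∂μ = z) (c : κ → ℂ) :
    ∫ ω, ‖∑ k, c k * Z k ω‖ ^ 2 ∂μ
      = (1 - ‖z‖ ^ 2) * ∑ k, ‖c k‖ ^ 2 + ‖z‖ ^ 2 * ‖∑ k, c k‖ ^ 2 := by
  classical
  have hint : ∀ k l, Integrable (fun ω => c k * conj (c l) * (Z k ω * conj (Z l ω))) μ :=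
    fun k l => ((Integrable.of_bound ((hZ k).mul
      (Complex.continuous_conj.comp_aestronglyMeasurable (hZ l))) 1
      (ae_of_all _ fun ω => by simp [hnorm]))).const_mul _
  have hexpand : ∀ ω, ((‖∑ k, c k * Z k ω‖ ^ 2 : ℝ) : ℂ)
      = ∑ k, ∑ l, c k * conj (c l) * (Z k ω * conj (Z l ω)) := by
    intro ω
    rw [Complex.ofReal_pow, ← Complex.mul_conj', map_sum, Finset.sum_mul_sum]
    simp only [map_mul]
    exact Finset.sum_congr rfl fun k _ => Finset.sum_congr rfl fun l _ => by ring
  apply Complex.ofReal_injective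
  rw [← integral_complex_ofReal, integral_congr_ae (ae_of_all _ hexpand),
    integral_finsetSum _ fun k _ => integrable_finsetSum _ fun l _ => hint k l]
  simp only [integral_finsetSum _ fun l _ => hint _ l, integral_const_mul,
    integral_mul_conj_of_pairwise_indepFun hZ hnorm hindep hmean, sum_sum_mul_conj_mul_ite]
  push_cast
  simp only [Complex.mul_conj']

theorem integral_norm_sum_mul_exp_I_mul_sq [Fintype κ] {X : κ → Ω → ℝ}
    (hX : ∀ k, Measurable (X k)) (hindep : Pairwise fun k l => IndepFun (X k) (X l) μ)
    {ν : Measure ℝ} (hlaw : ∀ k, μ.map (X k) = ν) {r : ℝ}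
    (hr : ∫ x, Complex.exp (Complex.I * x) ∂ν = r) (c : κ → ℂ) :
    ∫ ω, ‖∑ k, c k * Complex.exp (Complex.I * X k ω)‖ ^ 2 ∂μ
      = (1 - r ^ 2) * ∑ k, ‖c k‖ ^ 2 + r ^ 2 * ‖∑ k, c k‖ ^ 2 := by
  have hexp : Measurable fun x : ℝ => Complex.exp (Complex.I * x) := by fun_prop
  have hmean : ∀ k, ∫ ω, Complex.exp (Complex.I * X k ω) ∂μ = r := fun k => by
    rw [← hr, ← hlaw k, integral_map (hX k).aemeasurable hexp.aestronglyMeasurable]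
  simpa using integral_norm_sum_mul_sq_of_pairwise_indepFun
    (fun k => (hexp.comp (hX k)).aestronglyMeasurable)
    (fun k ω => Complex.norm_exp_I_mul_ofReal (X k ω))
    (fun k l hkl => (hindep hkl).comp hexp hexp) hmean c

end PhaseSums

theorem second_moment_product_of_phase_sums_general
    {Ω : Type*} [MeasureSpace Ω] [IsProbabilityMeasure (ℙ : Measure Ω)]
    (N M : ℕ)
    (ε : Fin N → Ω → ℝ) (φ : Fin M → Ω → ℝ)
    (hε_meas : ∀ n, Measurable (ε n)) (hφ_meas : ∀ m, Measurable (φ m))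
    (h_indep : iIndepFun (β := fun _ => ℝ) (m := fun _ => inferInstance)
      (Sum.elim ε φ : Fin N ⊕ Fin M → Ω → ℝ) ℙ)
    (νε : Measure ℝ) (hε_law : ∀ n, Measure.map (ε n) ℙ = νε)
    (ρ : ℝ) (hρ : ∫ x, Complex.exp (Complex.I * x) ∂νε = (ρ : ℂ))
    (νφ : Measure ℝ) (hφ_law : ∀ m, Measure.map (φ m) ℙ = νφ)
    (ι : ℝ) (hι : ∫ x, Complex.exp (Complex.I * x) ∂νφ = (ι : ℂ))
    (f : Fin N → ℂ) (hf : ∀ n, ‖f n‖ = 1) (g : ℂ) :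
    ∫ ω, (‖g * (∑ m, Complex.exp (Complex.I * φ m ω))
        * (∑ n, f n * Complex.exp (Complex.I * ε n ω))‖)^2 ∂ℙ
      = ‖g‖^2 * (M:ℝ) * (ι^2*(M:ℝ) + 1 - ι^2)
        * ((1-ρ^2)*(N:ℝ) + ρ^2*‖∑ n, f n‖^2) := by
  have hφφ : ∫ ω, ‖∑ m, Complex.exp (Complex.I * φ m ω)‖ ^ 2
      = (1 - ι ^ 2) * M + ι ^ 2 * M ^ 2 := by
    simpa using integral_norm_sum_mul_exp_I_mul_sq hφ_meas
      (fun m m' h => h_indep.indepFun (Sum.inr_injective.ne h)) hφ_law hι 1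
  have hεε : ∫ ω, ‖∑ n, f n * Complex.exp (Complex.I * ε n ω)‖ ^ 2
      = (1 - ρ ^ 2) * N + ρ ^ 2 * ‖∑ n, f n‖ ^ 2 := by
    simpa [hf] using integral_norm_sum_mul_exp_I_mul_sq hε_meas
      (fun n n' h => h_indep.indepFun (Sum.inl_injective.ne h)) hε_law hρ f
  have hsplit : ∫ ω, (‖g * (∑ m, Complex.exp (Complex.I * φ m ω))
        * (∑ n, f n * Complex.exp (Complex.I * ε n ω))‖)^2
      = ‖g‖ ^ 2 * ((∫ ω, ‖∑ m, Complex.exp (Complex.I * φ m ω)‖ ^ 2)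
        * ∫ ω, ‖∑ n, f n * Complex.exp (Complex.I * ε n ω)‖ ^ 2) := by
    simp only [norm_mul, mul_pow, mul_assoc]
    rw [integral_const_mul]
    congr 1
    exact (h_indep.indepFun_sumElim hε_meas hφ_meas).symm.integral_fun_comp_mul_comp
      (f := fun x => ‖∑ m, Complex.exp (Complex.I * x m)‖ ^ 2)
      (g := fun x => ‖∑ n, f n * Complex.exp (Complex.I * x n)‖ ^ 2)
      (by fun_prop) (by fun_prop)
      (Continuous.aestronglyMeasurable (by fun_prop))
      (Continuous.aestronglyMeasurable (by fun_prop))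
  rw [hsplit, hφφ, hεε]
  ring

/-- eq. (56) in the paper: for mutually independent i.i.d. families
`(ε_n)` with `ρ := E[e^{iε_1}]` real and `(φ_m)` with `ι := E[e^{iφ_1}]` real, unit-modulus
`f_n` and any complex `g`,
`E[|g (Σ_m e^{iφ_m})(Σ_n f_n e^{iε_n})|²] = |g|² M(ι²M+1−ι²)((1−ρ²)N + ρ²|Σ_n f_n|²)`. -/
theorem second_moment_product_of_phase_sums
    {Ω : Type*} [MeasureSpace Ω] [IsProbabilityMeasure (ℙ : Measure Ω)]
    (N M : ℕ) (hN : 0 < N) (hM : 0 < M)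
    (ε : Fin N → Ω → ℝ) (φ : Fin M → Ω → ℝ)
    (hε_meas : ∀ n, Measurable (ε n)) (hφ_meas : ∀ m, Measurable (φ m))
    (h_indep : iIndepFun (β := fun _ => ℝ) (m := fun _ => inferInstance)
      (Sum.elim ε φ : Fin N ⊕ Fin M → Ω → ℝ) ℙ)
    (νε : Measure ℝ) [IsProbabilityMeasure νε] (hε_law : ∀ n, Measure.map (ε n) ℙ = νε)
    (ρ : ℝ) (hρ : ∫ x, Complex.exp (Complex.I * x) ∂νε = (ρ : ℂ))
    (νφ : Measure ℝ) [IsProbabilityMeasure νφ] (hφ_law : ∀ m, Measure.map (φ m) ℙ = νφ)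
    (ι : ℝ) (hι : ∫ x, Complex.exp (Complex.I * x) ∂νφ = (ι : ℂ))
    (f : Fin N → ℂ) (hf : ∀ n, ‖f n‖ = 1) (g : ℂ) :
    ∫ ω, (‖g * (∑ m, Complex.exp (Complex.I * φ m ω))
        * (∑ n, f n * Complex.exp (Complex.I * ε n ω))‖)^2 ∂ℙ
      = ‖g‖^2 * (M:ℝ) * (ι^2*(M:ℝ) + 1 - ι^2)
        * ((1-ρ^2)*(N:ℝ) + ρ^2*‖∑ n, f n‖^2) :=
  second_moment_product_of_phase_sums_general N M ε φ hε_meas hφ_meas h_indep νε hε_law ρ hρ νφ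
    hφ_law ι hι f hf g
end
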